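/- arXiv:1904.09659 — 3 statements merged into one kernel-verified Lean document; each statement's English description precedes it below -/
import Mathlib

section
/- Split pixel corner value lemma: if the bilinear function R on the unit square with corner values a,b,c,d has an interior critical point p (a saddle, with v11 = d+a-b-c ≠ 0, 0 < x* < 1, 0 < y* < 1) and a > R(p), then d > R(p), b < R(p), and c < R(p); i.e., two opposite corners lie above the split value and the other two lie below. -/
noncomputable def bilin (a b c d : ℝ) (x y : ℝ) : ℝ :=
  a + (b - a) * x + (c - a) * y + (d + a - b - c) * (x * y)

/-- Split pixel corners value: if a corner lies above the split value, the
opposite corner does as well, and the other two corners lie below. -/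
theorem split_pixel_corners (a b c d : ℝ)
    (hv : d + a - b - c ≠ 0)
    (hx : 0 < (a - c) / (d + a - b - c) ∧ (a - c) / (d + a - b - c) < 1)
    (hy : 0 < (a - b) / (d + a - b - c) ∧ (a - b) / (d + a - b - c) < 1)
    (ha : a > bilin a b c d ((a - c) / (d + a - b - c)) ((a - b) / (d + a - b - c))) :
    d > bilin a b c d ((a - c) / (d + a - b - c)) ((a - b) / (d + a - b - c)) ∧
    b < bilin a b c d ((a - c) / (d + a - b - c)) ((a - b) / (d + a - b - c)) ∧
    c < bilin a b c d ((a - c) / (d + a - b - c)) ((a - b) / (d + a - b - c)) := by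
  obtain ⟨hx0, hx1⟩ := hx
  obtain ⟨hy0, hy1⟩ := hy
  set v := d + a - b - c with hvdef
  have hR : bilin a b c d ((a - c) / v) ((a - b) / v)
      = a - (a - b) * (a - c) / v := by
    unfold bilin; field_simp; ring
  rw [hR] at ha ⊢
  have hpos : 0 < (a - b) * (a - c) / v := by linarith
  have hprod : 0 < ((a - c) / v) * ((a - b) / v) := mul_pos hx0 hy0
  have hvpos : 0 < v := by
    rcases lt_trichotomy v 0 with h | h | h
    · exfalso
      rw [div_mul_div_comm] at hprod
      have hv2 : 0 < v * v := mul_pos_of_neg_of_neg h h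
      have h1 : 0 < (a - c) * (a - b) := by
        have := (div_pos_iff.mp hprod)
        rcases this with ⟨h1, _⟩ | ⟨_, h2⟩
        · exact h1
        · linarith
      have h2 : (a - b) * (a - c) / v < 0 := div_neg_of_pos_of_neg (by linarith [h1]; ) h
      linarith
    · exact absurd h hv
    · exact h
  have hac : 0 < a - c := by
    have := (div_pos_iff.mp hx0)
    rcases this with ⟨h1, _⟩ | ⟨_, h2⟩
    · exact h1
    · linarith
  have hab : 0 < a - b := by
    have := (div_pos_iff.mp hy0)
    rcases this with ⟨h1, _⟩ | ⟨_, h2⟩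
    · exact h1
    · linarith
  have hdb : b < d := by
    have := (div_lt_one hvpos).mp hx1
    simp only [hvdef] at this ⊢
    linarith
  have hdc : c < d := by
    have := (div_lt_one hvpos).mp hy1
    simp only [hvdef] at this ⊢
    linarith
  have key : (a - b) * (a - c) / v * v = (a - b) * (a - c) :=
    div_mul_cancel₀ _ hv
  refine ⟨?_, ?_, ?_⟩
  · nlinarith [mul_pos (sub_pos.mpr hdb) (sub_pos.mpr hdc)]
  · nlinarith [mul_pos hab (sub_pos.mpr hdb)]
  · nlinarith [mul_pos hac (sub_pos.mpr hdc)]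
end

section
/- If an interior pixel point p of the unit square satisfies ∇R(p) = 0 and v11 ≠ 0, then p satisfies the saddle property: the four points p±(ε,ε) and p±(ε,-ε) (for small enough ε > 0 keeping them in the pixel) give two curves (the diagonals) through p such that the four half-segments from p are all monotonic, with increasing and decreasing directions interleaving in clockwise order. Concretely, R(p+(t,t)) - R(p) = v11·t² and R(p+(t,-t)) - R(p) = -v11·t², which have opposite signs for t ≠ 0. -/
noncomputable def Rbl (v00 v10 v01 v11 : ℝ) (x y : ℝ) : ℝ :=
  v00 + v10 * x + v01 * y + v11 * (x * y)

/-- At an interior critical point of a bilinear function with v11 ≠ 0, the two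
diagonal directions give R(p+(t,t)) - R(p) = v11·t² and
R(p+(t,-t)) - R(p) = -v11·t², which have opposite signs for t ≠ 0 (saddle). -/
theorem saddle_at_critical_point (v00 v10 v01 v11 : ℝ) (x y : ℝ)
    (hv : v11 ≠ 0)
    (hx : x ∈ Set.Ioo (0:ℝ) 1) (hy : y ∈ Set.Ioo (0:ℝ) 1)
    (h1 : v10 + v11 * y = 0) (h2 : v01 + v11 * x = 0) :
    ∀ t : ℝ,
      (Rbl v00 v10 v01 v11 (x + t) (y + t) - Rbl v00 v10 v01 v11 x y
        = v11 * t ^ 2) ∧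
      (Rbl v00 v10 v01 v11 (x + t) (y - t) - Rbl v00 v10 v01 v11 x y
        = -(v11 * t ^ 2)) ∧
      (t ≠ 0 → (v11 * t ^ 2) * (-(v11 * t ^ 2)) < 0) := by
  intro t
  refine ⟨?_, ?_, ?_⟩
  · simp only [Rbl]; linear_combination t*h1 + t*h2
  · simp only [Rbl]; linear_combination t*h1 - t*h2
  · intro ht
    have h : v11 * t ^ 2 ≠ 0 := by positivity
    nlinarith [sq_nonneg (v11 * t ^ 2), sq_abs (v11 * t ^ 2), mul_self_pos.mpr h]
end

section
/- If v10·v01 > 0 (and v01+v11x ≠ 0 on (0,1)), then the level set of R at value R(0,0) intersects the open unit square (0,1)² in the empty set, i.e., the corner isoline does not enter the pixel interior. -/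
/-- If v10·v01 > 0 (and v01+v11·x vanishes nowhere on (0,1)), the corner
isoline does not enter the pixel interior. -/
theorem corner_isoline_avoids_interior (v00 v10 v01 v11 : ℝ)
    (hsign : v10 * v01 > 0)
    (hden : ∀ x ∈ Set.Ioo (0:ℝ) 1, v01 + v11 * x ≠ 0) :
    ∀ x y : ℝ, x ∈ Set.Ioo (0:ℝ) 1 → y ∈ Set.Ioo (0:ℝ) 1 →
      Rbl v00 v10 v01 v11 x y ≠ v00 := by
  rintro x y ⟨hx0, hx1⟩ ⟨hy0, hy1⟩ h
  have key : v10 * x + y * (v01 + v11 * x) = 0 := by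
    unfold Rbl at h; nlinarith [h]
  have hdne : v01 + v11 * x ≠ 0 := hden x ⟨hx0, hx1⟩
  -- claim: v01 * (v01 + v11*x) > 0  (the denominator keeps the sign of v01)
  have hpos : v01 * (v01 + v11 * x) > 0 := by
    rcases lt_trichotomy (v01 * (v01 + v11 * x)) 0 with hneg | hzero | hpos
    · exfalso
      have hv11 : v11 ≠ 0 := by
        intro hz
        rw [hz] at hneg
        nlinarith [sq_nonneg v01]
      have hmul : v01 * v11 < 0 := by nlinarith [sq_nonneg v01]
      have h0 : v11 * (-v01 / v11) = -v01 := by field_simp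
      rcases mul_neg_iff.mp hmul with ⟨h1, h2⟩ | ⟨h1, h2⟩
      · -- v01 > 0, v11 < 0, so the denominator is negative at x: root in (0,x)
        have hdneg : v01 + v11 * x < 0 := by nlinarith
        have ht0 : (0:ℝ) < -v01 / v11 :=
          div_pos_iff.mpr (Or.inr ⟨by linarith, h2⟩)
        have ht1 : -v01 / v11 < x := by
          rw [div_lt_iff_of_neg h2]; nlinarith
        exact hden (-v01 / v11) ⟨ht0, ht1.trans hx1⟩ (by linarith [h0])
      · -- v01 < 0, v11 > 0
        have hdpos : 0 < v01 + v11 * x := by nlinarith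
        have ht0 : (0:ℝ) < -v01 / v11 :=
          div_pos_iff.mpr (Or.inl ⟨by linarith, h2⟩)
        have ht1 : -v01 / v11 < x := by
          rw [div_lt_iff₀ h2]; nlinarith
        exact hden (-v01 / v11) ⟨ht0, ht1.trans hx1⟩ (by linarith [h0])
    · exfalso
      rcases mul_eq_zero.mp hzero with h1 | h2
      · rw [h1] at hsign; simp at hsign
      · exact hdne h2
    · exact hpos
  -- hence v10 * (v01 + v11*x) > 0
  have hvd : v10 * (v01 + v11 * x) > 0 := by
    nlinarith [mul_pos hsign hpos, sq_nonneg v01, sq_nonneg (v01 + v11 * x)]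
  -- but key forces (v10*x)*(y*(v01+v11*x)) = -(y*(v01+v11*x))^2 ≤ 0
  have heq : v10 * x = -(y * (v01 + v11 * x)) := by linarith
  have h2 : (v10 * x) * (y * (v01 + v11 * x)) ≤ 0 := by
    rw [heq]; nlinarith [sq_nonneg (y * (v01 + v11 * x))]
  nlinarith [mul_pos (mul_pos hx0 hy0) hvd]
end
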